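/- arXiv:1503.00077 — 4 statements merged into one kernel-verified Lean document; each statement's English description precedes it below -/
import Mathlib

section
/- For every z ∈ ℂ, setting a = (1 + |z|²)^(−1/2), the following identity of 2×2 complex matrices holds: [[i z, i], [i, 0]] = [[i z a, i a], [i a, −i (conj z) a]] * [[1, conj z], [0, 1]] * [[a⁻¹, 0], [0, a]]. -/
open Matrix Complex

/-!
Multiplying out, the product on the right is `[[i z a b, i a² (1 + z̄ z)], [i a b, 0]]` with
`b = a⁻¹`, and `a² (1 + |z|²) = 1` by the choice of `a`.
-/

theorem Real.rpow_neg_half_sq_mul_self {x : ℝ} (hx : 0 < x) :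
    (x ^ (-(1 / 2 : ℝ))) ^ 2 * x = 1 := by
  rw [← Real.rpow_natCast, ← Real.rpow_mul hx.le]
  norm_num [Real.rpow_neg_one, hx.ne']

theorem Matrix.fin_two_eq_mul_upperUnitriangular_mul_diagonal {R : Type*} [CommRing R] (u z w a b : R)
    (hab : a * b = 1) (ha : a ^ 2 * (1 + w * z) = 1) :
    !![u * z, u; u, 0] =
      !![u * z * a, u * a; u * a, -u * w * a] * !![1, w; 0, 1] * !![b, 0; 0, a] := by
  ext i j
  fin_cases i <;> fin_cases j <;> simp [Matrix.mul_apply, Fin.sum_univ_succ]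
  · linear_combination -u * z * hab
  · linear_combination -u * ha
  · linear_combination -u * hab
  · ring

/-- The explicit Iwasawa factorization in `SL(2, ℂ)` of the matrix
`n_z σ = [[i z, i], [i, 0]]` as a product of a special unitary matrix, a unipotent
upper-triangular matrix, and a positive diagonal matrix, where
`a = (1 + |z|²)^(-1/2)`. -/
theorem iwasawa_factorization_nz_sigma (z : ℂ) :
    let a : ℝ := (1 + ‖z‖ ^ 2) ^ (-(1 / 2 : ℝ))
    (!![Complex.I * z, Complex.I; Complex.I, 0] : Matrix (Fin 2) (Fin 2) ℂ) =
      !![Complex.I * z * (a : ℂ), Complex.I * (a : ℂ);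
         Complex.I * (a : ℂ), -Complex.I * (starRingEnd ℂ z) * (a : ℂ)] *
      !![1, (starRingEnd ℂ z); 0, 1] *
      !![((a : ℂ))⁻¹, 0; 0, (a : ℂ)] := by
  intro a
  have ha : a ^ 2 * (1 + ‖z‖ ^ 2) = 1 := Real.rpow_neg_half_sq_mul_self (by positivity)
  have ha_ne : (a : ℂ) ≠ 0 := by
    rintro h
    simp [ofReal_eq_zero.mp h] at ha
  refine Matrix.fin_two_eq_mul_upperUnitriangular_mul_diagonal _ _ _ _ _ (mul_inv_cancel₀ ha_ne) ?_
  rw [conj_mul']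
  exact_mod_cast ha
end

section
/- In SL(3, ℂ), let ṡ₁ be the matrix with rows (0,i,0), (i,0,0), (0,0,1) and ṡ₂ the matrix with rows (1,0,0), (0,0,i), (0,i,0); for ζ ∈ ℂ let n¹²_ζ = I + ζ E₁₂ and n²³_ζ = I + ζ E₂₃; for z ∈ ℂ set a(z) = (1+|z|²)^(−1/2), and let κ₁(z) be the matrix with rows (i z a(z), i a(z), 0), (i a(z), −i (conj z) a(z), 0), (0,0,1) and κ₂(z) the matrix with rows (1,0,0), (0, i z a(z), i a(z)), (0, i a(z), −i (conj z) a(z)). Then for all ζ₁, ζ₂ ∈ ℂ, setting z₂ = ζ₂ / sqrt(1+|ζ₁|²), there exists a 3×3 upper-triangular complex matrix d with positive real diagonal entries such that n¹²_{ζ₁} * ṡ₁ * n²³_{ζ₂} * ṡ₂ = κ₁(ζ₁) * κ₂(z₂) * d. -/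
open Matrix

/-- The representative `ṡ₁` in `SL(3,ℂ)` of the simple reflection `r₁`. -/
def sdot1 : Matrix (Fin 3) (Fin 3) ℂ :=
  !![0, Complex.I, 0; Complex.I, 0, 0; 0, 0, 1]

/-- The representative `ṡ₂` in `SL(3,ℂ)` of the simple reflection `r₂`. -/
def sdot2 : Matrix (Fin 3) (Fin 3) ℂ :=
  !![1, 0, 0; 0, 0, Complex.I; 0, Complex.I, 0]

/-- The unipotent element `n¹²_ζ = I + ζ E₁₂`. -/
def n12 (ζ : ℂ) : Matrix (Fin 3) (Fin 3) ℂ := !![1, ζ, 0; 0, 1, 0; 0, 0, 1]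

/-- The unipotent element `n²³_ζ = I + ζ E₂₃`. -/
def n23 (ζ : ℂ) : Matrix (Fin 3) (Fin 3) ℂ := !![1, 0, 0; 0, 1, ζ; 0, 0, 1]

/-- `a(z) = (1 + |z|²)^(-1/2)`. -/
noncomputable def aFun (z : ℂ) : ℝ := (1 + ‖z‖ ^ 2) ^ (-(1 / 2 : ℝ))

/-- The special unitary factor `κ₁(z) = k(n_z ṡ₁)` in the first embedded `SL(2,ℂ)`. -/
noncomputable def kappa1 (z : ℂ) : Matrix (Fin 3) (Fin 3) ℂ :=
  !![Complex.I * z * (aFun z : ℂ), Complex.I * (aFun z : ℂ), 0;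
     Complex.I * (aFun z : ℂ), -Complex.I * (starRingEnd ℂ z) * (aFun z : ℂ), 0;
     0, 0, 1]

/-- The special unitary factor `κ₂(z) = k(n_z ṡ₂)` in the second embedded `SL(2,ℂ)`. -/
noncomputable def kappa2 (z : ℂ) : Matrix (Fin 3) (Fin 3) ℂ :=
  !![1, 0, 0;
     0, Complex.I * z * (aFun z : ℂ), Complex.I * (aFun z : ℂ);
     0, Complex.I * (aFun z : ℂ), -Complex.I * (starRingEnd ℂ z) * (aFun z : ℂ)]

/-!
In each embedded `SL(2,ℂ)` the Iwasawa factorisation reads `n_z ṡ = κ(z) b(z)` with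
`b(z) = [[u, z̄/u], [0, 1/u]]`, `u = √(1+|z|²)`. Factoring `n¹²_{ζ₁} ṡ₁` this way leaves
`b₁(ζ₁) n²³_{ζ₂} ṡ₂`. Pushing `b₁(ζ₁)` to the right through `n²³_{ζ₂}` rescales `ζ₂` by the
entry `1/u` of `b₁` and creates an `E₁₃` term, which `ṡ₂` carries to the upper triangular
position `E₁₂`; then factor `n²³_{ζ₂/u} ṡ₂` the same way. Upper triangular matrices with
positive diagonal are closed under products.
-/

open scoped ComplexOrder

namespace Matrix

variable {m R : Type*}

theorem IsUpperTriangular.mul_apply_self [Fintype m] [LinearOrder m]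
    [NonUnitalNonAssocSemiring R] {M N : Matrix m m R} (hM : M.IsUpperTriangular)
    (hN : N.IsUpperTriangular) (i : m) :
    (M * N) i i = M i i * N i i := by
  rw [mul_apply]
  refine Finset.sum_eq_single i (fun k _ hki => ?_) (by simp)
  rcases hki.lt_or_gt with hki | hik
  · rw [hM hki, zero_mul]
  · rw [hN hik, mul_zero]

def IsPosUpperTriangular [LT m] [Zero R] [LT R] (M : Matrix m m R) : Prop :=
  M.IsUpperTriangular ∧ ∀ i, 0 < M i i

theorem IsPosUpperTriangular.mul [Fintype m] [LinearOrder m] [NonUnitalNonAssocSemiring R]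
    [PartialOrder R] [PosMulStrictMono R] {M N : Matrix m m R}
    (hM : M.IsPosUpperTriangular) (hN : N.IsPosUpperTriangular) :
    (M * N).IsPosUpperTriangular :=
  ⟨hM.1.mul hN.1, fun i => (hM.1.mul_apply_self hN.1 i).symm ▸ mul_pos (hM.2 i) (hN.2 i)⟩

theorem isPosUpperTriangular_of_fin_three [Zero R] [LT R] {a b c d e f : R}
    (ha : 0 < a) (hd : 0 < d) (hf : 0 < f) :
    !![a, b, c; 0, d, e; 0, 0, f].IsPosUpperTriangular := by
  refine ⟨fun i j hji => ?_, fun i => ?_⟩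
  · fin_cases i <;> fin_cases j <;> first | rfl | exact absurd hji (by decide)
  · fin_cases i <;> assumption

end Matrix

theorem Complex.exists_ofReal_eq_of_pos {z : ℂ} (hz : 0 < z) : ∃ r : ℝ, 0 < r ∧ z = r :=
  ⟨z.re, (Complex.pos_iff.1 hz).1,
    Complex.eq_re_of_ofReal_le (r := 0) (by exact_mod_cast hz.le)⟩

noncomputable def sqrtOneAddNormSq (z : ℂ) : ℝ := √(1 + ‖z‖ ^ 2)

theorem sqrtOneAddNormSq_pos (z : ℂ) : 0 < sqrtOneAddNormSq z :=
  Real.sqrt_pos.2 (by positivity)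

theorem ofReal_sqrtOneAddNormSq_pos (z : ℂ) : 0 < (sqrtOneAddNormSq z : ℂ) :=
  Complex.zero_lt_real.2 (sqrtOneAddNormSq_pos z)

theorem aFun_eq_inv_sqrtOneAddNormSq (z : ℂ) : aFun z = (sqrtOneAddNormSq z)⁻¹ := by
  rw [aFun, Real.rpow_neg (by positivity), sqrtOneAddNormSq, Real.sqrt_eq_rpow]

theorem conj_mul_self_eq_sqrtOneAddNormSq_sq_sub_one (z : ℂ) :
    starRingEnd ℂ z * z = (sqrtOneAddNormSq z : ℂ) ^ 2 - 1 := by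
  rw [Complex.conj_mul', sqrtOneAddNormSq, ← Complex.ofReal_pow, ← Complex.ofReal_pow,
    Real.sq_sqrt (by positivity)]
  push_cast; ring

noncomputable def iwasawaAN1 (z : ℂ) : Matrix (Fin 3) (Fin 3) ℂ :=
  let u : ℂ := sqrtOneAddNormSq z
  !![u, starRingEnd ℂ z / u, 0; 0, u⁻¹, 0; 0, 0, 1]

theorem n12_mul_sdot1 (z : ℂ) : n12 z * sdot1 = kappa1 z * iwasawaAN1 z := by
  have hu := (ofReal_sqrtOneAddNormSq_pos z).ne'
  have hz := conj_mul_self_eq_sqrtOneAddNormSq_sq_sub_one z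
  rw [n12, sdot1, kappa1, iwasawaAN1, aFun_eq_inv_sqrtOneAddNormSq, Complex.ofReal_inv,
    mul_fin_three, mul_fin_three]
  ext i j
  fin_cases i <;> fin_cases j <;>
    simp only [Fin.zero_eta, Fin.mk_one, Fin.reduceFinMk, of_apply, cons_val', cons_val,
      cons_val_zero, cons_val_one, cons_val_fin_one] <;>
    field_simp <;> grind

noncomputable def iwasawaAN2 (z : ℂ) : Matrix (Fin 3) (Fin 3) ℂ :=
  let u : ℂ := sqrtOneAddNormSq z
  !![1, 0, 0; 0, u, starRingEnd ℂ z / u; 0, 0, u⁻¹]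

theorem n23_mul_sdot2 (z : ℂ) : n23 z * sdot2 = kappa2 z * iwasawaAN2 z := by
  have hu := (ofReal_sqrtOneAddNormSq_pos z).ne'
  have hz := conj_mul_self_eq_sqrtOneAddNormSq_sq_sub_one z
  rw [n23, sdot2, kappa2, iwasawaAN2, aFun_eq_inv_sqrtOneAddNormSq, Complex.ofReal_inv,
    mul_fin_three, mul_fin_three]
  ext i j
  fin_cases i <;> fin_cases j <;>
    simp only [Fin.zero_eta, Fin.mk_one, Fin.reduceFinMk, of_apply, cons_val', cons_val,
      cons_val_zero, cons_val_one, cons_val_fin_one] <;>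
    field_simp <;> grind

theorem isPosUpperTriangular_iwasawaAN2 (z : ℂ) : (iwasawaAN2 z).IsPosUpperTriangular :=
  isPosUpperTriangular_of_fin_three one_pos (ofReal_sqrtOneAddNormSq_pos z)
    (inv_pos.2 (ofReal_sqrtOneAddNormSq_pos z))

theorem iwasawaAN1_mul_n23_mul_sdot2 (z w : ℂ) :
    ∃ d : Matrix (Fin 3) (Fin 3) ℂ, d.IsPosUpperTriangular ∧
      iwasawaAN1 z * n23 w * sdot2 = n23 (w / sqrtOneAddNormSq z) * sdot2 * d := by
  set u : ℂ := (sqrtOneAddNormSq z : ℂ)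
  have hu : 0 < u := ofReal_sqrtOneAddNormSq_pos z
  have hu₀ := hu.ne'
  refine ⟨!![u, Complex.I * starRingEnd ℂ z * w / u, Complex.I * starRingEnd ℂ z / u;
    0, 1, 0; 0, 0, u⁻¹], isPosUpperTriangular_of_fin_three hu one_pos (inv_pos.2 hu), ?_⟩
  simp only [n23, sdot2, iwasawaAN1, mul_fin_three]
  ext i j
  fin_cases i <;> fin_cases j <;>
    simp only [Fin.zero_eta, Fin.mk_one, Fin.reduceFinMk, of_apply, cons_val', cons_val,
      cons_val_zero, cons_val_one, cons_val_fin_one] <;>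
    field_simp <;> grind

/-- The length-two change of variables in `SL(3,ℂ)`: with `z₂ = ζ₂ / √(1+|ζ₁|²)`,
`n¹²_{ζ₁} ṡ₁ n²³_{ζ₂} ṡ₂ = κ₁(ζ₁) κ₂(z₂) d` for some `d ∈ D(3)`. -/
theorem sl3_length_two_change_of_variables (ζ₁ ζ₂ : ℂ) :
    ∃ d : Matrix (Fin 3) (Fin 3) ℂ,
      (∀ i j : Fin 3, j < i → d i j = 0) ∧
      (∀ i : Fin 3, ∃ r : ℝ, 0 < r ∧ d i i = (r : ℂ)) ∧
      n12 ζ₁ * sdot1 * n23 ζ₂ * sdot2 =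
        kappa1 ζ₁ * kappa2 (ζ₂ / (Real.sqrt (1 + ‖ζ₁‖ ^ 2) : ℂ)) * d := by
  obtain ⟨d₁, hd₁, h_push⟩ := iwasawaAN1_mul_n23_mul_sdot2 ζ₁ ζ₂
  set z₂ := ζ₂ / (sqrtOneAddNormSq ζ₁ : ℂ)
  have hd := (isPosUpperTriangular_iwasawaAN2 z₂).mul hd₁
  refine ⟨iwasawaAN2 z₂ * d₁, fun i j hji => hd.1 hji,
    fun i => Complex.exists_ofReal_eq_of_pos (hd.2 i), ?_⟩
  calc n12 ζ₁ * sdot1 * n23 ζ₂ * sdot2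
      = kappa1 ζ₁ * (iwasawaAN1 ζ₁ * n23 ζ₂ * sdot2) := by
        rw [n12_mul_sdot1]; simp only [Matrix.mul_assoc]
    _ = kappa1 ζ₁ * (n23 z₂ * sdot2 * d₁) := by rw [h_push]
    _ = kappa1 ζ₁ * kappa2 z₂ * (iwasawaAN2 z₂ * d₁) := by
        rw [n23_mul_sdot2]; simp only [Matrix.mul_assoc]
end

section
/- In SL(3, ℂ), let ṡ₁ be the matrix with rows (0,i,0), (i,0,0), (0,0,1) and ṡ₂ the matrix with rows (1,0,0), (0,0,i), (0,i,0); for ζ ∈ ℂ let n¹²_ζ = I + ζ E₁₂ and n²³_ζ = I + ζ E₂₃; for z ∈ ℂ set a(z) = (1+|z|²)^(−1/2), and let κ₁(z) be the matrix with rows (i z a(z), i a(z), 0), (i a(z), −i (conj z) a(z), 0), (0,0,1) and κ₂(z) the matrix with rows (1,0,0), (0, i z a(z), i a(z)), (0, i a(z), −i (conj z) a(z)). Then for all ζ₁, ζ₂, ζ₃ ∈ ℂ, setting z₁ = ζ₁, z₂ = ζ₂ / sqrt(1+|ζ₁|²), and z₃ = (i (conj ζ₁) ζ₂ + ζ₃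 (1+|ζ₁|²)) / sqrt(1+|ζ₁|²+|ζ₂|²), there exists a 3×3 upper-triangular complex matrix d with positive real diagonal entries such that n¹²_{ζ₁} * ṡ₁ * n²³_{ζ₂} * ṡ₂ * n¹²_{ζ₃} * ṡ₁ = κ₁(z₁) * κ₂(z₂) * κ₁(z₃) * d. -/
open Matrix

/-!
Iwasawa decomposition one simple reflection at a time. In each embedded `SL(2,ℂ)`,
`n_z ṡ = κ(z) b(z)` with `b(z)` upper triangular with positive diagonal, and an upper triangular
`u` moves to the right past `n_ζ ṡ` as `u n_ζ ṡ = n_z ṡ u'`, where `z` solves one linear equation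
in the entries of `u` and `u'` again has positive diagonal. Alternating the two moves along
`r₁ r₂ r₁` turns the product into `κ₁(z₁) κ₂(z₂) κ₁(z₃) d`, and solving the two linear
equations gives Lu's coordinates `z₂`, `z₃`.
-/

open Complex ComplexConjugate
open scoped ComplexOrder

theorem aFun_eq_inv_sqrt (z : ℂ) : aFun z = (√(1 + ‖z‖ ^ 2))⁻¹ := by
  rw [aFun, Real.rpow_neg (by positivity), ← Real.sqrt_eq_rpow]

theorem aFun_pos (z : ℂ) : 0 < aFun z := by
  unfold aFun
  positivity

theorem aFun_sq_mul_one_add_mul_conj (z : ℂ) : (aFun z : ℂ) ^ 2 * (1 + z * conj z) = 1 := by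
  have h : aFun z ^ 2 * (1 + ‖z‖ ^ 2) = 1 := by
    rw [aFun_eq_inv_sqrt, inv_pow, Real.sq_sqrt (by positivity), inv_mul_cancel₀ (by positivity)]
  rw [mul_conj']
  exact_mod_cast h

theorem aFun_div_sqrt (w : ℂ) {c : ℝ} (hc : 0 < c) :
    aFun (w / (√c : ℂ)) = √c / √(c + ‖w‖ ^ 2) := by
  rw [aFun_eq_inv_sqrt, norm_div, norm_real, Real.norm_of_nonneg (Real.sqrt_nonneg c), div_pow,
    Real.sq_sqrt hc.le, show 1 + ‖w‖ ^ 2 / c = (c + ‖w‖ ^ 2) / c by field_simp,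
    Real.sqrt_div' _ hc.le, inv_div]

theorem n12_mul_sdot1_eq_kappa1_mul (z : ℂ) :
    n12 z * sdot1 =
      kappa1 z * !![(aFun z : ℂ)⁻¹, aFun z * conj z, 0; 0, aFun z, 0; 0, 0, 1] := by
  have ha : (aFun z : ℂ) ≠ 0 := by exact_mod_cast (aFun_pos z).ne'
  have h := aFun_sq_mul_one_add_mul_conj z
  ext i j
  fin_cases i <;> fin_cases j <;> simp [n12, sdot1, kappa1, ha]
    <;> grind [I_mul_I]

theorem n23_mul_sdot2_eq_kappa2_mul (z : ℂ) :
    n23 z * sdot2 =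
      kappa2 z * !![1, 0, 0; 0, (aFun z : ℂ)⁻¹, aFun z * conj z; 0, 0, aFun z] := by
  have ha : (aFun z : ℂ) ≠ 0 := by exact_mod_cast (aFun_pos z).ne'
  have h := aFun_sq_mul_one_add_mul_conj z
  ext i j
  fin_cases i <;> fin_cases j <;> simp [n23, sdot2, kappa2, ha]
    <;> grind [I_mul_I]

theorem upper_mul_upper {R : Type*} [Semiring R] (p q r s t w p' q' r' s' t' w' : R) :
    !![p, q, r; 0, s, t; 0, 0, w] * !![p', q', r'; 0, s', t'; 0, 0, w'] =
      !![p * p', p * q' + q * s', p * r' + q * t' + r * w'; 0, s * s', s * t' + t * w';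
        0, 0, w * w'] := by
  simp [add_assoc]

theorem upper_mul_n12_mul_sdot1 {p q r s t w ζ z : ℂ} (hz : s * z = p * ζ + q) :
    !![p, q, r; 0, s, t; 0, 0, w] * (n12 ζ * sdot1) =
      n12 z * sdot1 * !![s, 0, -I * t; 0, p, -I * (r - z * t); 0, 0, w] := by
  ext i j
  fin_cases i <;> fin_cases j <;> simp [n12, sdot1]
  all_goals grind [I_mul_I]

theorem upper_mul_n23_mul_sdot2 {p q r s t w ζ z : ℂ} (hz : w * z = s * ζ + t) :
    !![p, q, r; 0, s, t; 0, 0, w] * (n23 ζ * sdot2) =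
      n23 z * sdot2 * !![p, I * (q * ζ + r), I * q; 0, w, 0; 0, 0, s] := by
  ext i j
  fin_cases i <;> fin_cases j <;> simp [n23, sdot2]
  all_goals grind [I_mul_I]

theorem upper_triangular_pos_diag {p s w : ℂ} (hp : 0 < p) (hs : 0 < s) (hw : 0 < w)
    (q r t : ℂ) :
    (∀ i j : Fin 3, j < i → !![p, q, r; 0, s, t; 0, 0, w] i j = 0) ∧
      ∀ i : Fin 3, ∃ x : ℝ, 0 < x ∧ !![p, q, r; 0, s, t; 0, 0, w] i i = x := by
  refine ⟨fun i j hij => ?_, fun i => ?_⟩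
  · fin_cases i <;> fin_cases j <;> first | rfl | exact absurd hij (by decide)
  · have eq_ofReal {z : ℂ} (hz : 0 < z) : ∃ x : ℝ, 0 < x ∧ z = x :=
      let ⟨x, hx, hxz⟩ := RCLike.pos_iff_exists_ofReal.mp hz
      ⟨x, hx, hxz.symm⟩
    fin_cases i
    exacts [eq_ofReal hp, eq_ofReal hs, eq_ofReal hw]

theorem n12_sdot1_n23_sdot2_n12_sdot1_eq_kappa_mul_upper {ζ₁ ζ₂ ζ₃ z₂ z₃ : ℂ}
    (h₂ : z₂ = aFun ζ₁ * ζ₂)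
    (h₃ : (aFun z₂ : ℂ)⁻¹ * z₃ = (aFun ζ₁ : ℂ)⁻¹ * ζ₃ + I * (aFun ζ₁ * conj ζ₁ * ζ₂)) :
    ∃ p q r s t w : ℂ, 0 < p ∧ 0 < s ∧ 0 < w ∧
      n12 ζ₁ * sdot1 * n23 ζ₂ * sdot2 * n12 ζ₃ * sdot1 =
        kappa1 ζ₁ * kappa2 z₂ * kappa1 z₃ * !![p, q, r; 0, s, t; 0, 0, w] := by
  have ha₁ := aFun_pos ζ₁
  have ha₂ := aFun_pos z₂
  have ha₃ := aFun_pos z₃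
  refine ⟨?p, ?q, ?r, ?s, ?t, ?w, ?hp, ?hs, ?hw, ?eq⟩
  case eq =>
    rw [show n12 ζ₁ * sdot1 * n23 ζ₂ * sdot2 * n12 ζ₃ * sdot1 =
        n12 ζ₁ * sdot1 * ((n23 ζ₂ * sdot2) * (n12 ζ₃ * sdot1)) by simp only [mul_assoc],
      n12_mul_sdot1_eq_kappa1_mul, mul_assoc (kappa1 ζ₁), ← mul_assoc _ (n23 ζ₂ * sdot2),
      upper_mul_n23_mul_sdot2 (z := z₂) (by rw [h₂]; ring), n23_mul_sdot2_eq_kappa2_mul,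
      mul_assoc (kappa2 z₂), upper_mul_upper]
    simp only [mul_zero, zero_mul, mul_one, one_mul, add_zero, zero_add]
    rw [mul_assoc (kappa2 z₂), upper_mul_n12_mul_sdot1 h₃, n12_mul_sdot1_eq_kappa1_mul,
      mul_assoc (kappa1 z₃), upper_mul_upper]
    simp only [mul_assoc]
    -- assigns the entries `p, …, w` of the triangular factor
    rfl
  all_goals positivity

/-- The `SL(3,ℂ)` change of variables from holomorphic coordinates `(ζ₁, ζ₂, ζ₃)` to
Lu's coordinates `(z₁, z₂, z₃)` for the reduced word `w = r₁ r₂ r₁`: with `z₁ = ζ₁`,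
`z₂ = ζ₂ / √(1+|ζ₁|²)` and `z₃ = (i ζ̄₁ ζ₂ + ζ₃ (1+|ζ₁|²)) / √(1+|ζ₁|²+|ζ₂|²)`,
`n¹²_{ζ₁} ṡ₁ n²³_{ζ₂} ṡ₂ n¹²_{ζ₃} ṡ₁ = κ₁(z₁) κ₂(z₂) κ₁(z₃) d` for some `d ∈ D(3)`. -/
theorem sl3_length_three_change_of_variables (ζ₁ ζ₂ ζ₃ : ℂ) :
    ∃ d : Matrix (Fin 3) (Fin 3) ℂ,
      (∀ i j : Fin 3, j < i → d i j = 0) ∧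
      (∀ i : Fin 3, ∃ r : ℝ, 0 < r ∧ d i i = (r : ℂ)) ∧
      n12 ζ₁ * sdot1 * n23 ζ₂ * sdot2 * n12 ζ₃ * sdot1 =
        kappa1 ζ₁ *
        kappa2 (ζ₂ / (Real.sqrt (1 + ‖ζ₁‖ ^ 2) : ℂ)) *
        kappa1 ((Complex.I * (starRingEnd ℂ ζ₁) * ζ₂ + ζ₃ * (1 + ‖ζ₁‖ ^ 2)) /
          (Real.sqrt (1 + ‖ζ₁‖ ^ 2 + ‖ζ₂‖ ^ 2) : ℂ)) * d := by
  have hA : (0 : ℝ) < 1 + ‖ζ₁‖ ^ 2 := by positivity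
  have hsq : (√(1 + ‖ζ₁‖ ^ 2) : ℂ) ^ 2 = 1 + ‖ζ₁‖ ^ 2 := by
    exact_mod_cast Real.sq_sqrt hA.le
  have h₂ : ζ₂ / (√(1 + ‖ζ₁‖ ^ 2) : ℂ) = aFun ζ₁ * ζ₂ := by
    rw [aFun_eq_inv_sqrt]
    push_cast
    ring
  have h₃ : (aFun (ζ₂ / (√(1 + ‖ζ₁‖ ^ 2) : ℂ)) : ℂ)⁻¹ *
      ((I * conj ζ₁ * ζ₂ + ζ₃ * (1 + ‖ζ₁‖ ^ 2)) / (√(1 + ‖ζ₁‖ ^ 2 + ‖ζ₂‖ ^ 2) : ℂ)) =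
      (aFun ζ₁ : ℂ)⁻¹ * ζ₃ + I * (aFun ζ₁ * conj ζ₁ * ζ₂) := by
    have hB : (√(1 + ‖ζ₁‖ ^ 2 + ‖ζ₂‖ ^ 2) : ℂ) ≠ 0 := by positivity
    rw [aFun_div_sqrt _ hA, aFun_eq_inv_sqrt]
    push_cast
    field_simp
    linear_combination -ζ₃ * hsq
  obtain ⟨p, q, r, s, t, w, hp, hs, hw, hM⟩ :=
    n12_sdot1_n23_sdot2_n12_sdot1_eq_kappa_mul_upper h₂ h₃
  have hd := upper_triangular_pos_diag hp hs hw q r t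
  exact ⟨_, hd.1, hd.2, hM⟩
end

section
/- In SL(3, ℂ), let ṡ₁ be the matrix with rows (0,i,0), (i,0,0), (0,0,1), ṡ₂ the matrix with rows (1,0,0), (0,0,i), (0,i,0), and ẇ = ṡ₁ * ṡ₂ * ṡ₁; for ζ ∈ ℂ let n¹²_ζ = I + ζ E₁₂ and n²³_ζ = I + ζ E₂₃. The map from ℂ³ to 3×3 complex matrices sending (ζ₁, ζ₂, ζ₃) to n¹²_{ζ₁} * ṡ₁ * n²³_{ζ₂} * ṡ₂ * n¹²_{ζ₃} * ṡ₁ * ẇ⁻¹ is injective, and its range is exactly the set of upper-triangular unipotent 3×3 complex matrices (upper-triangular matrices with all diagonal entries equal to 1). -/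
open Matrix

lemma winv_eq : (sdot1 * sdot2 * sdot1)⁻¹ = !![0, 0, -1; 0, -1, 0; (-1 : ℂ), 0, 0] := by
  apply Matrix.inv_eq_right_inv
  simp [sdot1, sdot2, Matrix.mul_fin_three, Complex.I_mul_I]
  exact Matrix.one_fin_three.symm

lemma I_cubed : Complex.I ^ 3 = -Complex.I := by
  rw [pow_succ, Complex.I_sq]; ring

lemma key (a b c : ℂ) :
    n12 a * sdot1 * n23 b * sdot2 * n12 c * sdot1 *
      (sdot1 * sdot2 * sdot1)⁻¹ =
    !![1, a, a * c + Complex.I * b; 0, 1, c; 0, 0, 1] := by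
  rw [winv_eq]
  simp only [sdot1, sdot2, n12, n23, Matrix.mul_fin_three]
  ext i j
  fin_cases i <;> fin_cases j <;> simp <;> ring_nf <;>
    simp [I_cubed] <;> ring

/-- The map `(ζ₁, ζ₂, ζ₃) ↦ n¹²_{ζ₁} ṡ₁ n²³_{ζ₂} ṡ₂ n¹²_{ζ₃} ṡ₁ ẇ⁻¹`, where
`ẇ = ṡ₁ ṡ₂ ṡ₁`, is injective with range exactly the upper-triangular unipotent
matrices in `SL(3,ℂ)`. -/
theorem sl3_big_cell_parameterization_bijective :
    Function.Injective
      (fun p : ℂ × ℂ × ℂ =>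
        n12 p.1 * sdot1 * n23 p.2.1 * sdot2 * n12 p.2.2 * sdot1 *
          (sdot1 * sdot2 * sdot1)⁻¹) ∧
    Set.range
      (fun p : ℂ × ℂ × ℂ =>
        n12 p.1 * sdot1 * n23 p.2.1 * sdot2 * n12 p.2.2 * sdot1 *
          (sdot1 * sdot2 * sdot1)⁻¹) =
      {u : Matrix (Fin 3) (Fin 3) ℂ |
        (∀ i j : Fin 3, j < i → u i j = 0) ∧ (∀ i : Fin 3, u i i = 1)} := by
  constructor
  · intro p q h
    simp only [key] at h
    have h01 := congrFun (congrFun h 0) 1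
    have h12 := congrFun (congrFun h 1) 2
    have h02 := congrFun (congrFun h 0) 2
    simp at h01 h12 h02
    obtain ⟨p1, p2, p3⟩ := p
    obtain ⟨q1, q2, q3⟩ := q
    simp_all
  · ext u
    constructor
    · rintro ⟨p, rfl⟩
      simp only [key, Set.mem_setOf_eq]
      constructor
      · intro i j hij
        fin_cases i <;> fin_cases j <;> simp_all [Matrix.vecHead, Matrix.vecTail]
      · intro i; fin_cases i <;> simp
    · rintro ⟨hlow, hdiag⟩
      refine ⟨⟨u 0 1, -Complex.I * (u 0 2 - u 0 1 * u 1 2), u 1 2⟩, ?_⟩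
      simp only [key]
      ext i j
      fin_cases i <;> fin_cases j <;>
        simp [hdiag 0, hdiag 1, hdiag 2, hlow 1 0 (by decide),
          hlow 2 0 (by decide), hlow 2 1 (by decide), Matrix.vecHead, Matrix.vecTail] <;>
        (try ring_nf) <;> (try simp [pow_succ, Complex.I_mul_I]) <;> (try ring)
end
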